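/- Let k ≥ 0, let h_k(t) = (t, cos t, sin t, …, cos kt, sin kt) ∈ ℝ^{2k+1}, and let P be a finite subset of {h_k(t) : 0 < t < 2π}. Then for any k+1 distinct parameters 0 < a₀ < a₁ < ⋯ < a_k < 2π with h_k(aᵢ) ∈ P, there exists a sphere in ℝ^{2k+1} passing through h_k(a₀), …, h_k(a_k) such that every other point of P lies strictly outside the sphere. -/

import Mathlib

open Real

noncomputable def genHelix (k : ℕ) (t : ℝ) : EuclideanSpace ℝ (Fin (2 * k + 1)) :=
  WithLp.toLp 2 (fun (i : Fin (2 * k + 1)) =>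
    if (i : ℕ) = 0 then t
    else if (i : ℕ) % 2 = 1 then Real.cos ((((i : ℕ) + 1) / 2 : ℕ) * t)
    else Real.sin ((((i : ℕ)) / 2 : ℕ) * t))

lemma sumsplit1 (F : ℕ → ℝ) (k : ℕ) :
    ∑ j ∈ Finset.range (2*k+1), F j = F 0 + ∑ m ∈ Finset.range k, (F (2*m+1) + F (2*m+2)) := by
  induction k with
  | zero => simp
  | succ n ih =>
      have h1 : 2*(n+1)+1 = (2*n+1) + 1 + 1 := by ring
      rw [h1, Finset.sum_range_succ, Finset.sum_range_succ, ih, Finset.sum_range_succ]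
      ring

lemma sumsplit3 (F : ℕ → ℝ) (k : ℕ) :
    ∑ j ∈ Finset.range (2*k+3), F j
      = F 0 + F 1 + F 2 + ∑ m ∈ Finset.range k, (F (2*m+3) + F (2*m+4)) := by
  induction k with
  | zero => simp [Finset.sum_range_succ]
  | succ n ih =>
      have h1 : 2*(n+1)+3 = (2*n+3) + 1 + 1 := by ring
      rw [h1, Finset.sum_range_succ, Finset.sum_range_succ, ih, Finset.sum_range_succ]
      ring

lemma expI_inj {t₁ t₂ : ℝ} (h1 : t₁ ∈ Set.Ioo (0:ℝ) (2*π)) (h2 : t₂ ∈ Set.Ioo (0:ℝ) (2*π))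
    (h : Complex.exp (t₁ * Complex.I) = Complex.exp (t₂ * Complex.I)) : t₁ = t₂ := by
  rw [Complex.exp_eq_exp_iff_exists_int] at h
  obtain ⟨n, hn⟩ := h
  have hI : (t₁ : ℂ) = t₂ + n * (2*π) := by
    have := mul_right_cancel₀ Complex.I_ne_zero (by rw [hn]; ring : (t₁:ℂ) * Complex.I = ((t₂:ℂ) + n * (2*π)) * Complex.I)
    exact this
  have hre : t₁ = t₂ + n * (2*π) := by exact_mod_cast hI
  have hpi : 0 < 2*π := by positivity
  have habs : |(n:ℝ)| * (2*π) < 1 * (2*π) := by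
    have h3 : |(n:ℝ) * (2*π)| < 2*π := by
      have h4 : (n:ℝ) * (2*π) = t₁ - t₂ := by linarith
      rw [h4, abs_lt]
      obtain ⟨p1, p2⟩ := h1; obtain ⟨p3, p4⟩ := h2
      constructor <;> linarith
    calc |(n:ℝ)| * (2*π) = |(n:ℝ) * (2*π)| := by rw [abs_mul, abs_of_pos hpi]
    _ < 2*π := h3
    _ = 1 * (2*π) := by ring
  have h5 : |(n:ℝ)| < 1 := lt_of_mul_lt_mul_right habs (le_of_lt hpi)
  have h6 : |n| < 1 := by exact_mod_cast h5
  have h7 : n = 0 := by rw [abs_lt] at h6; omega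
  rw [h7] at hre; push_cast at hre; linarith

/-- Trig polynomial zero bound. -/
lemma TB (k : ℕ) (c₀ : ℝ) (A B : ℕ → ℝ) (Z : Finset ℝ)
    (hZ : ∀ t ∈ Z, t ∈ Set.Ioo (0:ℝ) (2*π))
    (hcard : 2*k+1 ≤ Z.card)
    (hzero : ∀ t ∈ Z, c₀ + ∑ m ∈ Finset.range k,
      (A m * Real.cos (((m:ℝ)+1) * t) + B m * Real.sin (((m:ℝ)+1) * t)) = 0) :
    c₀ = 0 ∧ ∀ m < k, A m = 0 ∧ B m = 0 := by
  classical
  set u : ℕ → ℂ := fun m => ((A m : ℂ) - B m * Complex.I)/2 with hu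
  set v : ℕ → ℂ := fun m => ((A m : ℂ) + B m * Complex.I)/2 with hv
  set Q : Polynomial ℂ := Polynomial.monomial k (c₀:ℂ)
    + ∑ m ∈ Finset.range k, (Polynomial.monomial (k+1+m) (u m) + Polynomial.monomial (k-1-m) (v m)) with hQ
  have heval : ∀ t : ℝ, Q.eval (Complex.exp (t * Complex.I))
      = Complex.exp ((k:ℂ) * t * Complex.I) * ((c₀ + ∑ m ∈ Finset.range k,
        (A m * Real.cos (((m:ℝ)+1) * t) + B m * Real.sin (((m:ℝ)+1) * t)) : ℝ) : ℂ) := by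
    intro t
    have hpow : ∀ n : ℕ, (Complex.exp (t * Complex.I))^n = Complex.exp ((n:ℂ) * ((t:ℂ) * Complex.I)) :=
      fun n => (Complex.exp_nat_mul _ n).symm
    rw [hQ]
    simp only [Polynomial.eval_add, Polynomial.eval_finset_sum, Polynomial.eval_monomial]
    push_cast
    rw [mul_add, Finset.mul_sum]
    congr 1
    · rw [hpow k, show (k:ℂ)*((t:ℂ)*Complex.I) = (k:ℂ)*(t:ℂ)*Complex.I from by ring]
      ring
    · apply Finset.sum_congr rfl
      intro x hx
      have hxk : x + 1 ≤ k := by have := Finset.mem_range.mp hx; omega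
      rw [hpow, hpow]
      have hc1 : ((k+1+x : ℕ):ℂ) * ((t:ℂ) * Complex.I)
          = (k:ℂ)*(t:ℂ)*Complex.I + (((x:ℂ)+1)*(t:ℂ))*Complex.I := by push_cast; ring
      have hc2 : ((k-1-x : ℕ):ℂ) * ((t:ℂ) * Complex.I)
          = (k:ℂ)*(t:ℂ)*Complex.I + (-(((x:ℂ)+1)*(t:ℂ)))*Complex.I := by
        have e : k-1-x = k - (x+1) := by omega
        rw [e, Nat.cast_sub hxk]; push_cast; ring
      rw [hc1, hc2, Complex.exp_add, Complex.exp_add]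
      set E := Complex.exp ((k:ℂ)*(t:ℂ)*Complex.I) with hE
      rw [Complex.exp_mul_I, Complex.exp_mul_I, Complex.cos_neg, Complex.sin_neg]
      have key : u x * (Complex.cos (((x:ℂ)+1)*(t:ℂ)) + Complex.sin (((x:ℂ)+1)*(t:ℂ)) * Complex.I)
          + v x * (Complex.cos (((x:ℂ)+1)*(t:ℂ)) + -Complex.sin (((x:ℂ)+1)*(t:ℂ)) * Complex.I)
          = (A x : ℂ) * Complex.cos (((x:ℂ)+1)*(t:ℂ)) + (B x : ℂ) * Complex.sin (((x:ℂ)+1)*(t:ℂ)) := by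
        simp only [hu, hv]
        linear_combination (-(B x : ℂ) * Complex.sin (((x:ℂ)+1)*(t:ℂ))) * Complex.I_sq
      linear_combination Complex.exp ((k:ℂ)*(t:ℂ)*Complex.I) * key
  have hQ0 : Q = 0 := by
    by_contra hne
    have hdeg : Q.natDegree ≤ 2*k := by
      rw [hQ]
      apply le_trans (Polynomial.natDegree_add_le _ _)
      apply max_le
      · exact le_trans (Polynomial.natDegree_monomial_le _) (by omega)
      · apply Polynomial.natDegree_sum_le_of_forall_le
        intro m hm
        have hmk := Finset.mem_range.mp hm
        apply le_trans (Polynomial.natDegree_add_le _ _)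
        apply max_le
        · exact le_trans (Polynomial.natDegree_monomial_le _) (by omega)
        · exact le_trans (Polynomial.natDegree_monomial_le _) (by omega)
    have hroots : Z.image (fun t : ℝ => Complex.exp ((t:ℂ) * Complex.I)) ⊆ Q.roots.toFinset := by
      intro w hw
      obtain ⟨t, ht, rfl⟩ := Finset.mem_image.mp hw
      rw [Multiset.mem_toFinset, Polynomial.mem_roots']
      refine ⟨hne, ?_⟩
      show Polynomial.eval _ Q = 0
      rw [heval t, hzero t ht]
      simp
    have hcardim : (Z.image (fun t : ℝ => Complex.exp ((t:ℂ) * Complex.I))).card = Z.card := by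
      apply Finset.card_image_of_injOn
      intro t₁ h₁ t₂ h₂ h
      exact expI_inj (hZ _ h₁) (hZ _ h₂) h
    have : Z.card ≤ 2*k := by
      calc Z.card = (Z.image (fun t : ℝ => Complex.exp ((t:ℂ) * Complex.I))).card := hcardim.symm
      _ ≤ Q.roots.toFinset.card := Finset.card_le_card hroots
      _ ≤ Multiset.card Q.roots := Multiset.toFinset_card_le _
      _ ≤ Q.natDegree := Polynomial.card_roots' Q
      _ ≤ 2*k := hdeg
    omega
  -- extract coefficients
  have hcoeff : ∀ n : ℕ, Q.coeff n = 0 := by intro n; rw [hQ0]; simp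
  have hc0 : c₀ = 0 := by
    have h := hcoeff k
    rw [hQ] at h
    rw [Polynomial.coeff_add, Polynomial.finset_sum_coeff] at h
    simp only [Polynomial.coeff_add, Polynomial.coeff_monomial] at h
    have hsum : ∑ m ∈ Finset.range k,
        ((if k+1+m = k then u m else 0) + (if k-1-m = k then v m else 0)) = 0 := by
      apply Finset.sum_eq_zero
      intro m hm
      have hmk := Finset.mem_range.mp hm
      rw [if_neg (by omega), if_neg (by omega)]
      simp
    rw [if_pos trivial, hsum, add_zero] at h
    exact_mod_cast h
  refine ⟨hc0, ?_⟩
  intro m₀ hm₀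
  have h := hcoeff (k+1+m₀)
  rw [hQ] at h
  rw [Polynomial.coeff_add, Polynomial.finset_sum_coeff] at h
  simp only [Polynomial.coeff_add, Polynomial.coeff_monomial] at h
  rw [if_neg (by omega)] at h
  have hsum : ∑ m ∈ Finset.range k,
      ((if k+1+m = k+1+m₀ then u m else 0) + (if k-1-m = k+1+m₀ then v m else 0))
      = u m₀ := by
    have hterm : ∀ m ∈ Finset.range k,
        ((if k+1+m = k+1+m₀ then u m else 0) + (if k-1-m = k+1+m₀ then v m else 0))
          = (if m = m₀ then u m else 0) := by
      intro m hm
      have hmk := Finset.mem_range.mp hm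
      have h2 : (if k-1-m = k+1+m₀ then v m else 0) = 0 := if_neg (by omega)
      rw [h2, add_zero]
      by_cases he : m = m₀
      · subst he; rw [if_pos rfl, if_pos rfl]
      · rw [if_neg (by omega), if_neg he]
    rw [Finset.sum_congr rfl hterm, Finset.sum_ite_eq' (Finset.range k) m₀ u,
      if_pos (Finset.mem_range.mpr hm₀)]
  rw [hsum] at h
  have h2 : (A m₀ : ℂ) - B m₀ * Complex.I = 0 := by
    rw [hu] at h
    field_simp at h
    linear_combination h
  constructor
  · have := congrArg Complex.re h2; simpa using this
  · have := congrArg Complex.im h2; simpa using this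
open Real

noncomputable def Gfull (k : ℕ) (lam d e : ℝ) (α β : ℕ → ℝ) : ℝ → ℝ :=
  fun t => lam * t^2 + d * t + e + ∑ m ∈ Finset.range k,
    (α m * Real.cos (((m:ℝ)+1)*t) + β m * Real.sin (((m:ℝ)+1)*t))

noncomputable def G1 (k : ℕ) (lam d : ℝ) (α β : ℕ → ℝ) : ℝ → ℝ :=
  fun t => 2*lam*t + d + ∑ m ∈ Finset.range k,
    ((β m * ((m:ℝ)+1)) * Real.cos (((m:ℝ)+1)*t) + (-(α m) * ((m:ℝ)+1)) * Real.sin (((m:ℝ)+1)*t))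

noncomputable def G2 (k : ℕ) (lam : ℝ) (α β : ℕ → ℝ) : ℝ → ℝ :=
  fun t => 2*lam + ∑ m ∈ Finset.range k,
    ((-(α m) * ((m:ℝ)+1)^2) * Real.cos (((m:ℝ)+1)*t) + (-(β m) * ((m:ℝ)+1)^2) * Real.sin (((m:ℝ)+1)*t))

lemma hasDerivAt_Gfull (k : ℕ) (lam d e : ℝ) (α β : ℕ → ℝ) (t : ℝ) :
    HasDerivAt (Gfull k lam d e α β) (G1 k lam d α β t) t := by
  have h1 : HasDerivAt (fun t : ℝ => lam * t^2 + d * t + e) (2*lam*t + d) t := by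
    have := (((hasDerivAt_pow 2 t).const_mul lam).add ((hasDerivAt_id t).const_mul d)).add_const e
    exact this.congr_deriv (by norm_num; ring)
  have h2 : HasDerivAt (fun t : ℝ => ∑ m ∈ Finset.range k,
      (α m * Real.cos (((m:ℝ)+1)*t) + β m * Real.sin (((m:ℝ)+1)*t)))
      (∑ m ∈ Finset.range k,
      ((β m * ((m:ℝ)+1)) * Real.cos (((m:ℝ)+1)*t) + (-(α m) * ((m:ℝ)+1)) * Real.sin (((m:ℝ)+1)*t))) t := by
    apply HasDerivAt.fun_sum
    intro m _
    have hc : HasDerivAt (fun t : ℝ => ((m:ℝ)+1)*t) ((m:ℝ)+1) t := by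
      simpa using (hasDerivAt_id t).const_mul ((m:ℝ)+1)
    have := (hc.cos.const_mul (α m)).add (hc.sin.const_mul (β m))
    exact this.congr_deriv (by ring)
  have h3 := h1.add h2
  have : Gfull k lam d e α β = fun t : ℝ => (lam * t^2 + d * t + e) + ∑ m ∈ Finset.range k,
      (α m * Real.cos (((m:ℝ)+1)*t) + β m * Real.sin (((m:ℝ)+1)*t)) := rfl
  rw [this]
  exact h3

lemma hasDerivAt_G1 (k : ℕ) (lam d : ℝ) (α β : ℕ → ℝ) (t : ℝ) :
    HasDerivAt (G1 k lam d α β) (G2 k lam α β t) t := by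
  have h1 : HasDerivAt (fun t : ℝ => 2*lam*t + d) (2*lam) t := by
    simpa using ((hasDerivAt_id t).const_mul (2*lam)).add_const d
  have h2 : HasDerivAt (fun t : ℝ => ∑ m ∈ Finset.range k,
      ((β m * ((m:ℝ)+1)) * Real.cos (((m:ℝ)+1)*t) + (-(α m) * ((m:ℝ)+1)) * Real.sin (((m:ℝ)+1)*t)))
      (∑ m ∈ Finset.range k,
      ((-(α m) * ((m:ℝ)+1)^2) * Real.cos (((m:ℝ)+1)*t) + (-(β m) * ((m:ℝ)+1)^2) * Real.sin (((m:ℝ)+1)*t))) t := by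
    apply HasDerivAt.fun_sum
    intro m _
    have hc : HasDerivAt (fun t : ℝ => ((m:ℝ)+1)*t) ((m:ℝ)+1) t := by
      simpa using (hasDerivAt_id t).const_mul ((m:ℝ)+1)
    have := (hc.cos.const_mul (β m * ((m:ℝ)+1))).add (hc.sin.const_mul (-(α m) * ((m:ℝ)+1)))
    exact this.congr_deriv (by ring)
  have h3 := h1.add h2
  have : G1 k lam d α β = fun t : ℝ => (2*lam*t + d) + ∑ m ∈ Finset.range k,
      ((β m * ((m:ℝ)+1)) * Real.cos (((m:ℝ)+1)*t) + (-(α m) * ((m:ℝ)+1)) * Real.sin (((m:ℝ)+1)*t)) := rfl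
  rw [this]
  exact h3

lemma deriv_Gfull (k : ℕ) (lam d e : ℝ) (α β : ℕ → ℝ) :
    deriv (Gfull k lam d e α β) = G1 k lam d α β :=
  funext fun t => (hasDerivAt_Gfull k lam d e α β t).deriv

lemma deriv_G1 (k : ℕ) (lam d : ℝ) (α β : ℕ → ℝ) :
    deriv (G1 k lam d α β) = G2 k lam α β :=
  funext fun t => (hasDerivAt_G1 k lam d α β t).deriv

lemma diff_Gfull (k : ℕ) (lam d e : ℝ) (α β : ℕ → ℝ) : Differentiable ℝ (Gfull k lam d e α β) :=
  fun t => (hasDerivAt_Gfull k lam d e α β t).differentiableAt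

lemma diff_G1 (k : ℕ) (lam d : ℝ) (α β : ℕ → ℝ) : Differentiable ℝ (G1 k lam d α β) :=
  fun t => (hasDerivAt_G1 k lam d α β t).differentiableAt

lemma cont_G1 (k : ℕ) (lam d : ℝ) (α β : ℕ → ℝ) : Continuous (G1 k lam d α β) :=
  (diff_G1 k lam d α β).continuous

/-- Rolle chain on a finset of zeros. -/
lemma rolleFinset (f : ℝ → ℝ) (hf : Differentiable ℝ f) :
    ∀ (n : ℕ) (Z : Finset ℝ), Z.card = n → (∀ z ∈ Z, f z = 0) →
    ∃ W : Finset ℝ, Z.card ≤ W.card + 1 ∧ (∀ w ∈ W, deriv f w = 0) ∧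
      (∀ w ∈ W, (∃ z₁ ∈ Z, z₁ < w) ∧ (∃ z₂ ∈ Z, w < z₂)) ∧ (∀ w ∈ W, w ∉ Z) := by
  intro n
  induction n with
  | zero =>
      intro Z hZ _
      exact ⟨∅, by simp [hZ], by simp, by simp, by simp⟩
  | succ n ih =>
      intro Z hcard hzero
      rcases Nat.eq_zero_or_pos n with hn | hn
      · exact ⟨∅, by omega, by simp, by simp, by simp⟩
      · have hne : Z.Nonempty := Finset.card_pos.mp (by omega)
        set M := Z.max' hne with hM
        have hMZ : M ∈ Z := Z.max'_mem hne
        set Z' := Z.erase M with hZ'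
        have hcard' : Z'.card = n := by rw [hZ', Finset.card_erase_of_mem hMZ, hcard]; omega
        have hne' : Z'.Nonempty := Finset.card_pos.mp (by omega)
        set M' := Z'.max' hne' with hM'
        have hM'Z' : M' ∈ Z' := Z'.max'_mem hne'
        have hM'Z : M' ∈ Z := Finset.mem_of_mem_erase hM'Z'
        have hlt : M' < M :=
          lt_of_le_of_ne (Z.le_max' M' hM'Z) (Finset.ne_of_mem_erase hM'Z')
        obtain ⟨w, hwmem, hw0⟩ := exists_deriv_eq_zero hlt hf.continuous.continuousOn
          (by rw [hzero M' hM'Z, hzero M hMZ])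
        obtain ⟨W', hc', hd', hb', hnz'⟩ := ih Z' hcard'
          (fun z hz => hzero z (Finset.mem_of_mem_erase hz))
        have hupper : ∀ w' ∈ W', w' < M' := by
          intro w' hw'
          obtain ⟨_, z₂, hz₂, hlt₂⟩ := hb' w' hw'
          exact lt_of_lt_of_le hlt₂ (Z'.le_max' z₂ hz₂)
        have hwW' : w ∉ W' := fun hmem => absurd hwmem.1 (not_lt.mpr (le_of_lt (hupper w hmem)))
        refine ⟨insert w W', ?_, ?_, ?_, ?_⟩
        · rw [Finset.card_insert_of_notMem hwW']; omega
        · intro x hx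
          rcases Finset.mem_insert.mp hx with rfl | hx'
          · exact hw0
          · exact hd' x hx'
        · intro x hx
          rcases Finset.mem_insert.mp hx with rfl | hx'
          · exact ⟨⟨M', hM'Z, hwmem.1⟩, ⟨M, hMZ, hwmem.2⟩⟩
          · obtain ⟨⟨z₁, hz₁, h₁⟩, ⟨z₂, hz₂, h₂⟩⟩ := hb' x hx'
            exact ⟨⟨z₁, Finset.mem_of_mem_erase hz₁, h₁⟩, ⟨z₂, Finset.mem_of_mem_erase hz₂, h₂⟩⟩
        · intro x hx
          rcases Finset.mem_insert.mp hx with heq | hx'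
          · subst heq
            intro hxZ
            rcases eq_or_ne x M with heq2 | hxM
            · rw [heq2] at hwmem
              exact absurd hwmem.2 (lt_irrefl M)
            · have hmem2 : x ∈ Z' := Finset.mem_erase.mpr ⟨hxM, hxZ⟩
              exact absurd (lt_of_le_of_lt (Z'.le_max' x hmem2) hwmem.1) (lt_irrefl x)
          · intro hxZ
            rcases eq_or_ne x M with heq2 | hxM
            · rw [heq2] at hx'
              exact absurd (hupper M hx') (not_lt.mpr (le_of_lt hlt))
            · exact hnz' x hx' (Finset.mem_erase.mpr ⟨hxM, hxZ⟩)

/-- constant sign on an interval without zeros -/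
lemma sign_const {f : ℝ → ℝ} (hf : Continuous f) {a b : ℝ}
    (hne : ∀ t ∈ Set.Ioo a b, f t ≠ 0) {t₁ t₂ : ℝ}
    (h₁ : t₁ ∈ Set.Ioo a b) (h₂ : t₂ ∈ Set.Ioo a b) (hpos : 0 < f t₁) : 0 < f t₂ := by
  by_contra hle
  push_neg at hle
  have hlt : f t₂ < 0 := lt_of_le_of_ne hle (hne t₂ h₂)
  rcases le_total t₁ t₂ with h | h
  · have := intermediate_value_Ioo' h hf.continuousOn (a := t₁) (b := t₂)
    have h0 : (0:ℝ) ∈ Set.Ioo (f t₂) (f t₁) := ⟨hlt, hpos⟩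
    obtain ⟨x, hx, hfx⟩ := this h0
    exact hne x ⟨lt_trans h₁.1 hx.1, lt_trans hx.2 h₂.2⟩ hfx
  · have := intermediate_value_Ioo h hf.continuousOn (a := t₂) (b := t₁)
    have h0 : (0:ℝ) ∈ Set.Ioo (f t₂) (f t₁) := ⟨hlt, hpos⟩
    obtain ⟨x, hx, hfx⟩ := this h0
    exact hne x ⟨lt_trans h₂.1 hx.1, lt_trans hx.2 h₁.2⟩ hfx
/-- Rolle chain staying inside the interval. -/
lemma rolleIoo (f : ℝ → ℝ) (hf : Differentiable ℝ f) (Z : Finset ℝ)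
    (hZ : ∀ z ∈ Z, z ∈ Set.Ioo (0:ℝ) (2*π)) (hzero : ∀ z ∈ Z, f z = 0) :
    ∃ W : Finset ℝ, Z.card ≤ W.card + 1 ∧ (∀ w ∈ W, deriv f w = 0) ∧
      (∀ w ∈ W, w ∈ Set.Ioo (0:ℝ) (2*π)) ∧
      (∀ w ∈ W, (∃ z₁ ∈ Z, z₁ < w) ∧ (∃ z₂ ∈ Z, w < z₂)) ∧ (∀ w ∈ W, w ∉ Z) := by
  obtain ⟨W, h1, h2, h3, h4⟩ := rolleFinset f hf Z.card Z rfl hzero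
  refine ⟨W, h1, h2, ?_, h3, h4⟩
  intro w hw
  obtain ⟨⟨z₁, hz₁, hl⟩, ⟨z₂, hz₂, hr⟩⟩ := h3 w hw
  exact ⟨lt_trans (hZ z₁ hz₁).1 hl, lt_trans hr (hZ z₂ hz₂).2⟩

/-- zeros of G2 force coefficients to vanish -/
lemma fpp_zeros (k : ℕ) (lam : ℝ) (α β : ℕ → ℝ) (W : Finset ℝ)
    (hW : ∀ t ∈ W, t ∈ Set.Ioo (0:ℝ) (2*π)) (hcard : 2*k+1 ≤ W.card)
    (hz : ∀ t ∈ W, G2 k lam α β t = 0) :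
    lam = 0 ∧ ∀ m < k, α m = 0 ∧ β m = 0 := by
  have := TB k (2*lam) (fun m => -(α m) * ((m:ℝ)+1)^2) (fun m => -(β m) * ((m:ℝ)+1)^2) W hW hcard
    (by intro t ht; have := hz t ht; simpa [G2] using this)
  obtain ⟨h1, h2⟩ := this
  constructor
  · linarith
  · intro m hm
    obtain ⟨ha, hb⟩ := h2 m hm
    have hpos : ((m:ℝ)+1)^2 > 0 := by positivity
    constructor
    · rcases mul_eq_zero.mp ha with h | h
      · linarith
      · linarith
    · rcases mul_eq_zero.mp hb with h | h
      · linarith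
      · linarith

/-- 2k+3 zeros of Gfull in (0,2π) kill all coefficients. -/
lemma ZCfull (k : ℕ) (lam d e : ℝ) (α β : ℕ → ℝ) (Z : Finset ℝ)
    (hZ : ∀ t ∈ Z, t ∈ Set.Ioo (0:ℝ) (2*π)) (hcard : 2*k+3 ≤ Z.card)
    (hzero : ∀ t ∈ Z, Gfull k lam d e α β t = 0) :
    lam = 0 ∧ d = 0 ∧ e = 0 ∧ ∀ m < k, α m = 0 ∧ β m = 0 := by
  obtain ⟨W1, hc1, hd1, hi1, _, _⟩ := rolleIoo _ (diff_Gfull k lam d e α β) Z hZ hzero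
  rw [deriv_Gfull] at hd1
  obtain ⟨W2, hc2, hd2, hi2, _, _⟩ := rolleIoo _ (diff_G1 k lam d α β) W1 hi1 hd1
  rw [deriv_G1] at hd2
  obtain ⟨hlam, hab⟩ := fpp_zeros k lam α β W2 hi2 (by omega) hd2
  have hlin : ∀ t ∈ Z, d * t + e = 0 := by
    intro t ht
    have h := hzero t ht
    simp only [Gfull] at h
    rw [hlam] at h
    have hsum : ∑ m ∈ Finset.range k,
        (α m * Real.cos (((m:ℝ)+1)*t) + β m * Real.sin (((m:ℝ)+1)*t)) = 0 := by
      apply Finset.sum_eq_zero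
      intro m hm
      obtain ⟨h1, h2⟩ := hab m (Finset.mem_range.mp hm)
      rw [h1, h2]; ring
    rw [hsum] at h
    linarith
  obtain ⟨t₁, ht₁, t₂, ht₂, hne⟩ := Finset.one_lt_card.mp (show 1 < Z.card by omega)
  have e₁ := hlin t₁ ht₁
  have e₂ := hlin t₂ ht₂
  have hd : d = 0 := by
    rcases mul_eq_zero.mp (show d * (t₁ - t₂) = 0 by ring_nf; linarith) with h | h
    · exact h
    · exact absurd (by linarith : t₁ = t₂) hne
  refine ⟨hlam, hd, by rw [hd] at e₁; linarith, hab⟩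

/-- 2k+2 zeros of Gfull with lam = 0 kill the remaining coefficients. -/
lemma ZC2 (k : ℕ) (d e : ℝ) (α β : ℕ → ℝ) (Z : Finset ℝ)
    (hZ : ∀ t ∈ Z, t ∈ Set.Ioo (0:ℝ) (2*π)) (hcard : 2*k+2 ≤ Z.card)
    (hzero : ∀ t ∈ Z, Gfull k 0 d e α β t = 0) :
    d = 0 ∧ e = 0 ∧ ∀ m < k, α m = 0 ∧ β m = 0 := by
  obtain ⟨W1, hc1, hd1, hi1, _, _⟩ := rolleIoo _ (diff_Gfull k 0 d e α β) Z hZ hzero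
  rw [deriv_Gfull] at hd1
  have := TB k d (fun m => β m * ((m:ℝ)+1)) (fun m => -(α m) * ((m:ℝ)+1)) W1 hi1 (by omega)
    (by intro t ht; have := hd1 t ht; simp only [G1] at this; linarith [this])
  obtain ⟨h1, h2⟩ := this
  have hab : ∀ m < k, α m = 0 ∧ β m = 0 := by
    intro m hm
    obtain ⟨ha, hb⟩ := h2 m hm
    have hpos : ((m:ℝ)+1) > 0 := by positivity
    constructor
    · rcases mul_eq_zero.mp hb with h | h
      · linarith
      · linarith
    · rcases mul_eq_zero.mp ha with h | h
      · exact h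
      · linarith
  have hlin : ∀ t ∈ Z, e = 0 := by
    intro t ht
    have h := hzero t ht
    simp only [Gfull] at h
    rw [h1] at h
    have hsum : ∑ m ∈ Finset.range k,
        (α m * Real.cos (((m:ℝ)+1)*t) + β m * Real.sin (((m:ℝ)+1)*t)) = 0 := by
      apply Finset.sum_eq_zero
      intro m hm
      obtain ⟨ha, hb⟩ := hab m (Finset.mem_range.mp hm)
      rw [ha, hb]; ring
    rw [hsum] at h
    linarith
  obtain ⟨t₁, ht₁⟩ := Finset.card_pos.mp (show 0 < Z.card by omega)
  exact ⟨h1, hlin t₁ ht₁, hab⟩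

/-- all zeros of Gfull (lam ≠ 0) with 2k+2 distinct zeros are simple -/
lemma simplicity (k : ℕ) (lam d e : ℝ) (α β : ℕ → ℝ) (hlam : lam ≠ 0) (Z : Finset ℝ)
    (hZ : ∀ t ∈ Z, t ∈ Set.Ioo (0:ℝ) (2*π)) (hcard : 2*k+2 ≤ Z.card)
    (hzero : ∀ t ∈ Z, Gfull k lam d e α β t = 0)
    (z : ℝ) (hzZ : z ∈ Z) (hder : G1 k lam d α β z = 0) : False := by
  obtain ⟨W1, hc1, hd1, hi1, _, hnz1⟩ := rolleIoo _ (diff_Gfull k lam d e α β) Z hZ hzero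
  rw [deriv_Gfull] at hd1
  have hzW1 : z ∉ W1 := fun h => hnz1 z h hzZ
  set W1' := insert z W1 with hW1'
  have hc1' : 2*k+2 ≤ W1'.card := by
    rw [hW1', Finset.card_insert_of_notMem hzW1]; omega
  have hd1' : ∀ t ∈ W1', G1 k lam d α β t = 0 := by
    intro t ht
    rcases Finset.mem_insert.mp ht with rfl | h
    · exact hder
    · exact hd1 t h
  have hi1' : ∀ t ∈ W1', t ∈ Set.Ioo (0:ℝ) (2*π) := by
    intro t ht
    rcases Finset.mem_insert.mp ht with rfl | h
    · exact hZ t hzZ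
    · exact hi1 t h
  obtain ⟨W2, hc2, hd2, hi2, _, _⟩ := rolleIoo _ (diff_G1 k lam d α β) W1' hi1' hd1'
  rw [deriv_G1] at hd2
  obtain ⟨hlam0, _⟩ := fpp_zeros k lam α β W2 hi2 (by omega) hd2
  exact hlam hlam0

/-- The end-sign lemma: leading coefficient 1 forces positivity near the ends. -/
lemma lemS (k : ℕ) (d e : ℝ) (α β : ℕ → ℝ) (Z : Finset ℝ) (hne : Z.Nonempty)
    (hZ : ∀ t ∈ Z, t ∈ Set.Ioo (0:ℝ) (2*π)) (hcard : 2*k+2 ≤ Z.card)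
    (hzero : ∀ t ∈ Z, Gfull k 1 d e α β t = 0)
    (t₁ : ℝ) (ht₁ : t₁ ∈ Set.Ioo 0 (Z.min' hne)) (hft₁ : Gfull k 1 d e α β t₁ < 0)
    (t₂ : ℝ) (ht₂ : t₂ ∈ Set.Ioo (Z.max' hne) (2*π)) (hft₂ : Gfull k 1 d e α β t₂ < 0) :
    False := by
  set f := Gfull k 1 d e α β with hf
  set f' := G1 k 1 d α β with hf'
  have hmin : Z.min' hne ∈ Z := Z.min'_mem hne
  have hmax : Z.max' hne ∈ Z := Z.max'_mem hne
  have hmin0 : 0 < Z.min' hne := (hZ _ hmin).1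
  have hmax2 : Z.max' hne < 2*π := (hZ _ hmax).2
  -- no zeros of f' outside [min,max]
  have hnozero : ∀ y, (y ∈ Set.Ioo 0 (Z.min' hne) ∨ y ∈ Set.Ioo (Z.max' hne) (2*π)) →
      f' y ≠ 0 := by
    intro y hy hy0
    obtain ⟨W1, hc1, hd1, hi1, hb1, _⟩ := rolleIoo _ (diff_Gfull k 1 d e α β) Z hZ hzero
    rw [deriv_Gfull, ← hf'] at hd1
    have hyW1 : y ∉ W1 := by
      intro hmem
      obtain ⟨⟨z₁, hz₁, hl⟩, ⟨z₂, hz₂, hr⟩⟩ := hb1 y hmem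
      rcases hy with h | h
      · exact absurd (lt_trans (lt_of_le_of_lt (Z.min'_le z₁ hz₁) hl) h.2) (lt_irrefl _)
      · exact absurd (lt_trans h.1 (lt_of_lt_of_le hr (Z.le_max' z₂ hz₂))) (lt_irrefl _)
    have hyIoo : y ∈ Set.Ioo (0:ℝ) (2*π) := by
      rcases hy with h | h
      · exact ⟨h.1, lt_trans (lt_of_lt_of_le h.2 (Z.min'_le _ hmax)) hmax2⟩
      · exact ⟨lt_trans (lt_of_lt_of_le hmin0 (Z.min'_le _ hmax)) h.1, h.2⟩
    set W1' := insert y W1 with hW1'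
    have hc1' : 2*k+2 ≤ W1'.card := by
      rw [hW1', Finset.card_insert_of_notMem hyW1]; omega
    have hd1' : ∀ t ∈ W1', f' t = 0 := by
      intro t ht
      rcases Finset.mem_insert.mp ht with rfl | h
      · exact hy0
      · exact hd1 t h
    have hi1' : ∀ t ∈ W1', t ∈ Set.Ioo (0:ℝ) (2*π) := by
      intro t ht
      rcases Finset.mem_insert.mp ht with rfl | h
      · exact hyIoo
      · exact hi1 t h
    obtain ⟨W2, hc2, hd2, hi2, _, _⟩ := rolleIoo _ (diff_G1 k 1 d α β) W1' hi1' hd1'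
    rw [deriv_G1] at hd2
    obtain ⟨hlam0, _⟩ := fpp_zeros k 1 α β W2 hi2 (by omega) hd2
    exact one_ne_zero hlam0
  -- positive derivative on the left
  have hposL : ∀ t ∈ Set.Ioo (0:ℝ) (Z.min' hne), 0 < f' t := by
    obtain ⟨ξ, hξ, hξval⟩ := exists_hasDerivAt_eq_slope f f' ht₁.2
      (diff_Gfull k 1 d e α β).continuous.continuousOn
      (fun x _ => hasDerivAt_Gfull k 1 d e α β x)
    have hξpos : 0 < f' ξ := by
      rw [hξval, hzero _ hmin]
      apply div_pos <;> [linarith; linarith [hξ.1, hξ.2, ht₁.1]]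
    have hξIoo : ξ ∈ Set.Ioo (0:ℝ) (Z.min' hne) := ⟨lt_trans ht₁.1 hξ.1, hξ.2⟩
    intro t ht
    exact sign_const (cont_G1 k 1 d α β) (fun s hs => hnozero s (Or.inl hs)) hξIoo ht hξpos
  -- negative derivative on the right
  have hnegR : ∀ t ∈ Set.Ioo (Z.max' hne) (2*π), f' t < 0 := by
    obtain ⟨ξ, hξ, hξval⟩ := exists_hasDerivAt_eq_slope f f' ht₂.1
      (diff_Gfull k 1 d e α β).continuous.continuousOn
      (fun x _ => hasDerivAt_Gfull k 1 d e α β x)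
    have hξneg : 0 < -f' ξ := by
      rw [hξval, hzero _ hmax]
      have : (f t₂ - 0) / (t₂ - Z.max' hne) < 0 :=
        div_neg_of_neg_of_pos (by linarith) (by linarith [hξ.1, hξ.2])
      linarith
    have hξIoo : ξ ∈ Set.Ioo (Z.max' hne) (2*π) := ⟨hξ.1, lt_trans hξ.2 ht₂.2⟩
    intro t ht
    have h4 := sign_const (f := fun s => -f' s) ((cont_G1 k 1 d α β).neg)
      (fun s hs h0 => hnozero s (Or.inr hs) (by linarith [neg_eq_zero.mp h0])) hξIoo ht hξneg
    have h5 : 0 < -(f' t) := h4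
    linarith
  -- boundary values
  have hf'0 : 0 ≤ f' 0 := by
    have htend : Filter.Tendsto f' (nhdsWithin 0 (Set.Ioi 0)) (nhds (f' 0)) :=
      ((cont_G1 k 1 d α β).tendsto 0).mono_left nhdsWithin_le_nhds
    apply ge_of_tendsto htend
    filter_upwards [Ioo_mem_nhdsGT_of_mem (Set.mem_Ico.mpr ⟨le_refl 0, hmin0⟩)] with t ht
    exact le_of_lt (hposL t ht)
  have hf'2π : f' (2*π) ≤ 0 := by
    have htend : Filter.Tendsto f' (nhdsWithin (2*π) (Set.Iio (2*π))) (nhds (f' (2*π))) :=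
      ((cont_G1 k 1 d α β).tendsto (2*π)).mono_left nhdsWithin_le_nhds
    apply le_of_tendsto htend
    filter_upwards [Ioo_mem_nhdsLT_of_mem (Set.mem_Ioc.mpr ⟨hmax2, le_refl (2*π)⟩)] with t ht
    exact le_of_lt (hnegR t ht)
  -- periodicity computation
  have hper : f' (2*π) = f' 0 + 4*π := by
    simp only [hf', G1]
    have hsum : ∀ m ∈ Finset.range k,
        ((β m * ((m:ℝ)+1)) * Real.cos (((m:ℝ)+1)*(2*π)) + (-(α m) * ((m:ℝ)+1)) * Real.sin (((m:ℝ)+1)*(2*π)))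
        = ((β m * ((m:ℝ)+1)) * Real.cos (((m:ℝ)+1)*0) + (-(α m) * ((m:ℝ)+1)) * Real.sin (((m:ℝ)+1)*0)) := by
      intro m _
      have hc : Real.cos (((m:ℝ)+1)*(2*π)) = 1 := by
        have := Real.cos_nat_mul_two_pi (m+1)
        push_cast at this
        convert this using 2
      have hs : Real.sin (((m:ℝ)+1)*(2*π)) = 0 := by
        have : (((m:ℝ)+1)*(2*π)) = (2*(m+1) : ℕ) * π := by push_cast; ring
        rw [this, Real.sin_nat_mul_pi]
      rw [hc, hs]
      simp
    rw [Finset.sum_congr rfl hsum]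
    ring
  linarith [Real.pi_pos]
lemma Gfull_add (k : ℕ) (l1 l2 d1 d2 e1 e2 : ℝ) (α1 α2 β1 β2 : ℕ → ℝ) (t : ℝ) :
    Gfull k (l1+l2) (d1+d2) (e1+e2) (fun m => α1 m + α2 m) (fun m => β1 m + β2 m) t
      = Gfull k l1 d1 e1 α1 β1 t + Gfull k l2 d2 e2 α2 β2 t := by
  simp only [Gfull]
  have h : ∀ m ∈ Finset.range k,
      ((α1 m + α2 m) * Real.cos (((m:ℝ)+1)*t) + (β1 m + β2 m) * Real.sin (((m:ℝ)+1)*t))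
      = (α1 m * Real.cos (((m:ℝ)+1)*t) + β1 m * Real.sin (((m:ℝ)+1)*t))
        + (α2 m * Real.cos (((m:ℝ)+1)*t) + β2 m * Real.sin (((m:ℝ)+1)*t)) := by
    intro m _; ring
  rw [Finset.sum_congr rfl h, Finset.sum_add_distrib]
  ring

lemma Gfull_smul (k : ℕ) (c lam d e : ℝ) (α β : ℕ → ℝ) (t : ℝ) :
    Gfull k (c*lam) (c*d) (c*e) (fun m => c * α m) (fun m => c * β m) t
      = c * Gfull k lam d e α β t := by
  simp only [Gfull]
  have h : ∀ m ∈ Finset.range k,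
      ((c * α m) * Real.cos (((m:ℝ)+1)*t) + (c * β m) * Real.sin (((m:ℝ)+1)*t))
      = c * (α m * Real.cos (((m:ℝ)+1)*t) + β m * Real.sin (((m:ℝ)+1)*t)) := by
    intro m _; ring
  rw [Finset.sum_congr rfl h, ← Finset.mul_sum]
  ring

/-- Unisolvence: interpolation at 2k+3 distinct points in (0,2π). -/
lemma interp (k : ℕ) (pts : Fin (2*k+3) → ℝ) (hinj : Function.Injective pts)
    (hIoo : ∀ p, pts p ∈ Set.Ioo (0:ℝ) (2*π)) (target : Fin (2*k+3) → ℝ) :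
    ∃ lam d e : ℝ, ∃ α β : ℕ → ℝ, ∀ p, Gfull k lam d e α β (pts p) = target p := by
  classical
  set vα : (Fin (2*k+3) → ℝ) → ℕ → ℝ :=
    fun v m => if h : 2*m+3 < 2*k+3 then v ⟨2*m+3, h⟩ else 0 with hvα
  set vβ : (Fin (2*k+3) → ℝ) → ℕ → ℝ :=
    fun v m => if h : 2*m+4 < 2*k+3 then v ⟨2*m+4, h⟩ else 0 with hvβ
  have h0 : (0:ℕ) < 2*k+3 := by omega
  have h1 : (1:ℕ) < 2*k+3 := by omega
  have h2 : (2:ℕ) < 2*k+3 := by omega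
  set L : (Fin (2*k+3) → ℝ) →ₗ[ℝ] (Fin (2*k+3) → ℝ) :=
    { toFun := fun v => fun p =>
        Gfull k (v ⟨2, h2⟩) (v ⟨1, h1⟩) (v ⟨0, h0⟩) (vα v) (vβ v) (pts p)
      map_add' := by
        intro v w
        funext p
        have hα : vα (v + w) = fun m => vα v m + vα w m := by
          funext m
          simp only [hvα]
          split_ifs with h
          · simp
          · simp
        have hβ : vβ (v + w) = fun m => vβ v m + vβ w m := by
          funext m
          simp only [hvβ]
          split_ifs with h
          · simp
          · simp
        show Gfull k ((v+w) ⟨2, h2⟩) ((v+w) ⟨1, h1⟩) ((v+w) ⟨0, h0⟩) (vα (v+w)) (vβ (v+w)) (pts p) = _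
        rw [hα, hβ]
        have := Gfull_add k (v ⟨2,h2⟩) (w ⟨2,h2⟩) (v ⟨1,h1⟩) (w ⟨1,h1⟩) (v ⟨0,h0⟩) (w ⟨0,h0⟩)
          (vα v) (vα w) (vβ v) (vβ w) (pts p)
        simpa using this
      map_smul' := by
        intro c v
        funext p
        have hα : vα (c • v) = fun m => c * vα v m := by
          funext m
          simp only [hvα]
          split_ifs with h
          · simp
          · simp
        have hβ : vβ (c • v) = fun m => c * vβ v m := by
          funext m
          simp only [hvβ]
          split_ifs with h
          · simp
          · simp
        show Gfull k ((c • v) ⟨2, h2⟩) ((c • v) ⟨1, h1⟩) ((c • v) ⟨0, h0⟩) (vα (c • v)) (vβ (c • v)) (pts p) = _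
        rw [hα, hβ]
        have := Gfull_smul k c (v ⟨2,h2⟩) (v ⟨1,h1⟩) (v ⟨0,h0⟩) (vα v) (vβ v) (pts p)
        simpa using this } with hL
  have hLinj : Function.Injective L := by
    rw [← LinearMap.ker_eq_bot, LinearMap.ker_eq_bot']
    intro v hv
    have hvz : ∀ p, Gfull k (v ⟨2, h2⟩) (v ⟨1, h1⟩) (v ⟨0, h0⟩) (vα v) (vβ v) (pts p) = 0 := by
      intro p
      have := congrFun hv p
      simpa [hL] using this
    set Z : Finset ℝ := Finset.image pts Finset.univ with hZdef
    have hcardZ : Z.card = 2*k+3 := by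
      rw [hZdef, Finset.card_image_of_injective _ hinj, Finset.card_univ, Fintype.card_fin]
    have hZIoo : ∀ t ∈ Z, t ∈ Set.Ioo (0:ℝ) (2*π) := by
      intro t ht
      obtain ⟨p, _, rfl⟩ := Finset.mem_image.mp ht
      exact hIoo p
    have hZzero : ∀ t ∈ Z, Gfull k (v ⟨2, h2⟩) (v ⟨1, h1⟩) (v ⟨0, h0⟩) (vα v) (vβ v) t = 0 := by
      intro t ht
      obtain ⟨p, _, rfl⟩ := Finset.mem_image.mp ht
      exact hvz p
    obtain ⟨hlam, hd, he, hab⟩ := ZCfull k _ _ _ _ _ Z hZIoo (by omega) hZzero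
    funext p
    show v p = 0
    have hlt := p.isLt
    have hkey : ∀ (n : ℕ) (h : n < 2*k+3), v ⟨n, h⟩ = 0 := by
      intro n h
      rcases Nat.lt_or_ge n 3 with h3 | h3
      · interval_cases n
        · exact he
        · exact hd
        · exact hlam
      · rcases Nat.even_or_odd n with heven | hodd
        · obtain ⟨l, hl⟩ := heven
          obtain ⟨m, hm⟩ : ∃ m, n = 2*m+4 := ⟨l - 2, by omega⟩
          subst hm
          have hmk : m < k := by omega
          have := (hab m hmk).2
          simp only [hvβ] at this
          rw [dif_pos h] at this
          exact this
        · obtain ⟨l, hl⟩ := hodd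
          obtain ⟨m, hm⟩ : ∃ m, n = 2*m+3 := ⟨l - 1, by omega⟩
          subst hm
          have hmk : m < k := by omega
          have := (hab m hmk).1
          simp only [hvα] at this
          rw [dif_pos h] at this
          exact this
    have : p = ⟨(p:ℕ), hlt⟩ := by ext; rfl
    rw [this]
    exact hkey _ hlt
  have hLsurj : Function.Surjective L := LinearMap.injective_iff_surjective.mp hLinj
  obtain ⟨v, hv⟩ := hLsurj target
  refine ⟨v ⟨2, h2⟩, v ⟨1, h1⟩, v ⟨0, h0⟩, vα v, vβ v, ?_⟩
  intro p
  have := congrFun hv p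
  simpa [hL] using this
lemma mono_of_step (g : ℕ → ℝ) (N : ℕ) (hstep : ∀ j, j < N → g j < g (j+1)) :
    ∀ j1 j2, j1 < j2 → j2 ≤ N → g j1 < g j2 := by
  intro j1 j2
  induction j2 with
  | zero => omega
  | succ n ih =>
      intro h hle
      rcases Nat.lt_or_ge j1 n with h' | h'
      · exact lt_trans (ih h' (by omega)) (hstep n (by omega))
      · have : j1 = n := by omega
        subst this
        exact hstep j1 (by omega)

lemma EPS (x : ℝ) (hx : x < 2*π) (S : Set ℝ) (hS : S.Finite) :
    ∃ ε : ℝ, 0 < ε ∧ x + ε < 2*π ∧ ∀ y ∈ S, y ∉ Set.Ioc x (x+ε) := by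
  classical
  set T : Finset ℝ := insert (2*π) (hS.toFinset.filter (fun y => x < y)) with hT
  have hTne : T.Nonempty := ⟨2*π, Finset.mem_insert_self _ _⟩
  set μ := T.min' hTne with hμ
  have hxμ : x < μ := by
    rw [hμ]
    rw [Finset.lt_min'_iff]
    intro y hy
    rcases Finset.mem_insert.mp hy with rfl | hy'
    · exact hx
    · exact (Finset.mem_filter.mp hy').2
  have hμ2π : μ ≤ 2*π := Finset.min'_le _ _ (Finset.mem_insert_self _ _)
  refine ⟨(μ - x)/2, by linarith, by linarith, ?_⟩
  intro y hy hmem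
  have hyT : y ∈ T := Finset.mem_insert_of_mem
    (Finset.mem_filter.mpr ⟨hS.mem_toFinset.mpr hy, hmem.1⟩)
  have := Finset.min'_le _ _ hyT
  have := hmem.2
  linarith

/-- The main construction lemma. -/
lemma core (k : ℕ) (a : Fin (k+1) → ℝ) (hmono : StrictMono a)
    (ha : ∀ i, a i ∈ Set.Ioo (0:ℝ) (2*π)) (B : Set ℝ) (hBfin : B.Finite)
    (hB : B ⊆ Set.Ioo (0:ℝ) (2*π)) (hdisj : ∀ i, a i ∉ B) :
    ∃ d e : ℝ, ∃ α β : ℕ → ℝ, (∀ i, Gfull k 1 d e α β (a i) = 0) ∧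
      ∀ b ∈ B, 0 < Gfull k 1 d e α β b := by
  classical
  have hπ : 0 < π := Real.pi_pos
  -- choose the gaps ε i
  have hEPS : ∀ i : Fin (k+1), ∃ ε : ℝ, 0 < ε ∧ a i + ε < 2*π ∧
      ∀ y ∈ (B ∪ Set.range a), y ∉ Set.Ioc (a i) (a i + ε) :=
    fun i => EPS (a i) (ha i).2 (B ∪ Set.range a) (hBfin.union (Set.finite_range a))
  choose ε hε1 hε2 hε3 using hEPS
  -- the node sequence
  set q : ℕ → ℝ := fun j =>
    if j = 0 then 0
    else if h : j ≤ 2*k+2 then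
      (a ⟨(j-1)/2, by omega⟩ + if (j-1) % 2 = 1 then ε ⟨(j-1)/2, by omega⟩ else 0)
    else 2*π with hq
  have hq0 : q 0 = 0 := by simp [hq]
  have hqlast : q (2*k+3) = 2*π := by
    simp only [hq]
    rw [if_neg (by omega), dif_neg (by omega)]
  have hqa : ∀ i : Fin (k+1), q (2*(i:ℕ)+1) = a i := by
    intro i
    have hile := i.isLt
    simp only [hq]
    rw [if_neg (by omega), dif_pos (by omega)]
    have e1 : (2*(i:ℕ)+1-1)/2 = (i:ℕ) := by omega
    have e2 : (2*(i:ℕ)+1-1) % 2 = 0 := by omega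
    simp only [e1, e2]
    rw [if_neg (by omega)]
    rw [add_zero]
  have hqae : ∀ i : Fin (k+1), q (2*(i:ℕ)+2) = a i + ε i := by
    intro i
    have hile := i.isLt
    simp only [hq]
    rw [if_neg (by omega), dif_pos (by omega)]
    have e1 : (2*(i:ℕ)+2-1)/2 = (i:ℕ) := by omega
    have e2 : (2*(i:ℕ)+2-1) % 2 = 1 := by omega
    simp only [e1, e2]
    rw [if_pos trivial]
  -- strict monotonicity of the nodes
  have hstep : ∀ j, j < 2*k+3 → q j < q (j+1) := by
    intro j hj
    rcases Nat.eq_zero_or_pos j with rfl | hjpos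
    · have : q 1 = a ⟨0, by omega⟩ := by
        have := hqa ⟨0, by omega⟩
        simpa using this
      rw [hq0, this]
      exact (ha ⟨0, by omega⟩).1
    · rcases Nat.even_or_odd (j-1) with ⟨l, hl⟩ | ⟨l, hl⟩
      · -- j = 2l+1, next is a l + ε l
        have hjl : j = 2*l+1 := by omega
        have hlk : l < k+1 := by omega
        subst hjl
        rw [hqa ⟨l, hlk⟩, show 2*l+1+1 = 2*l+2 from rfl, hqae ⟨l, hlk⟩]
        have := hε1 ⟨l, hlk⟩
        linarith
      · -- j = 2l+2
        have hjl : j = 2*l+2 := by omega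
        have hlk : l < k+1 := by omega
        subst hjl
        rw [hqae ⟨l, hlk⟩]
        rcases Nat.lt_or_ge (2*l+3) (2*k+3) with hlt | hge
        · -- next node is a (l+1)
          have hl1k : l+1 < k+1 := by omega
          rw [show 2*l+2+1 = 2*(l+1)+1 from by ring, hqa ⟨l+1, hl1k⟩]
          have hmem : a ⟨l+1, hl1k⟩ ∈ B ∪ Set.range a := Or.inr ⟨⟨l+1, hl1k⟩, rfl⟩
          have hnot := hε3 ⟨l, hlk⟩ _ hmem
          have hlt' : a ⟨l, hlk⟩ < a ⟨l+1, hl1k⟩ := hmono (by simp [Fin.lt_def])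
          by_contra hcon
          push_neg at hcon
          exact hnot ⟨hlt', hcon⟩
        · -- l = k, next node is 2π
          have heq : 2*l+2+1 = 2*k+3 := by omega
          rw [heq, hqlast]
          exact hε2 ⟨l, hlk⟩
  have hqmono : ∀ j1 j2, j1 < j2 → j2 ≤ 2*k+3 → q j1 < q j2 := mono_of_step q (2*k+3) hstep
  have hqIoo : ∀ j, 1 ≤ j → j ≤ 2*k+2 → q j ∈ Set.Ioo (0:ℝ) (2*π) := by
    intro j h1 h2
    constructor
    · rw [← hq0]; exact hqmono 0 j (by omega) (by omega)
    · rw [← hqlast]; exact hqmono j (2*k+3) (by omega) (by omega)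
  have ha0 : 0 < a ⟨0, by omega⟩ := (ha _).1
  have hqle : ∀ j1 j2, j1 ≤ j2 → j2 ≤ 2*k+3 → q j1 ≤ q j2 := by
    intro j1 j2 h hle
    rcases eq_or_lt_of_le h with rfl | h'
    · exact le_refl _
    · exact le_of_lt (hqmono j1 j2 h' hle)
  have haq1 : q 1 = a ⟨0, by omega⟩ := by
    have := hqa ⟨0, by omega⟩
    simpa using this
  set s : ℝ := a ⟨0, by omega⟩ / 2 with hs
  have hs1 : s < q 1 := by rw [haq1, hs]; linarith
  have hsIoo : s ∈ Set.Ioo (0:ℝ) (2*π) := by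
    constructor
    · rw [hs]; linarith
    · have := (ha ⟨0, by omega⟩).2; rw [hs]; linarith
  set pts : Fin (2*k+3) → ℝ :=
    fun p => if (p:ℕ) < 2*k+2 then q ((p:ℕ)+1) else s with hpts
  have hptsinj : Function.Injective pts := by
    intro p p' h
    simp only [hpts] at h
    by_cases h1 : (p:ℕ) < 2*k+2 <;> by_cases h2 : (p':ℕ) < 2*k+2
    · rw [if_pos h1, if_pos h2] at h
      rcases lt_trichotomy (p:ℕ) (p':ℕ) with hlt | heq | hgt
      · exact absurd h (ne_of_lt (hqmono _ _ (by omega) (by omega)))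
      · exact Fin.ext heq
      · exact absurd h.symm (ne_of_lt (hqmono _ _ (by omega) (by omega)))
    · rw [if_pos h1, if_neg h2] at h
      exact absurd h (ne_of_gt (lt_of_lt_of_le hs1 (hqle 1 _ (by omega) (by omega))))
    · rw [if_neg h1, if_pos h2] at h
      exact absurd h (ne_of_lt (lt_of_lt_of_le hs1 (hqle 1 _ (by omega) (by omega))))
    · exact Fin.ext (by omega)
  have hptsIoo : ∀ p, pts p ∈ Set.Ioo (0:ℝ) (2*π) := by
    intro p
    simp only [hpts]
    by_cases h1 : (p:ℕ) < 2*k+2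
    · rw [if_pos h1]; exact hqIoo _ (by omega) (by omega)
    · rw [if_neg h1]; exact hsIoo
  obtain ⟨lam, d, e, α, β, hinterp⟩ := interp k pts hptsinj hptsIoo
    (fun p => if (p:ℕ) < 2*k+2 then (0:ℝ) else 1)
  have hFnode : ∀ j, j < 2*k+2 → Gfull k lam d e α β (q (j+1)) = 0 := by
    intro j hj
    have := hinterp ⟨j, by omega⟩
    simp only [hpts] at this
    rw [if_pos (show ((⟨j, by omega⟩ : Fin (2*k+3)):ℕ) < 2*k+2 from hj),
      if_pos (show ((⟨j, by omega⟩ : Fin (2*k+3)):ℕ) < 2*k+2 from hj)] at this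
    exact this
  have hFs : Gfull k lam d e α β s = 1 := by
    have := hinterp ⟨2*k+2, by omega⟩
    simp only [hpts] at this
    rw [if_neg (show ¬((⟨2*k+2, by omega⟩ : Fin (2*k+3)):ℕ) < 2*k+2 from by simp),
      if_neg (show ¬((⟨2*k+2, by omega⟩ : Fin (2*k+3)):ℕ) < 2*k+2 from by simp)] at this
    exact this
  set Z : Finset ℝ := (Finset.range (2*k+2)).image (fun j => q (j+1)) with hZdef
  have hZmem : ∀ j, j < 2*k+2 → q (j+1) ∈ Z := by
    intro j hj
    exact Finset.mem_image.mpr ⟨j, Finset.mem_range.mpr hj, rfl⟩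
  have hZmem' : ∀ y ∈ Z, ∃ j, j < 2*k+2 ∧ q (j+1) = y := by
    intro y hy
    obtain ⟨j, hj, hjy⟩ := Finset.mem_image.mp hy
    exact ⟨j, Finset.mem_range.mp hj, hjy⟩
  have hZcard : Z.card = 2*k+2 := by
    rw [hZdef, Finset.card_image_of_injOn, Finset.card_range]
    intro j1 h1 j2 h2 h
    simp only [Finset.coe_range, Set.mem_Iio] at h1 h2
    rcases lt_trichotomy j1 j2 with hlt | heq | hgt
    · exact absurd h (ne_of_lt (hqmono _ _ (by omega) (by omega)))
    · exact heq
    · exact absurd h.symm (ne_of_lt (hqmono _ _ (by omega) (by omega)))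
  have hZIoo : ∀ t ∈ Z, t ∈ Set.Ioo (0:ℝ) (2*π) := by
    intro t ht
    obtain ⟨j, hj, rfl⟩ := hZmem' t ht
    exact hqIoo _ (by omega) (by omega)
  have hZzero : ∀ t ∈ Z, Gfull k lam d e α β t = 0 := by
    intro t ht
    obtain ⟨j, hj, rfl⟩ := hZmem' t ht
    exact hFnode j hj
  have hlamne : lam ≠ 0 := by
    intro h0
    rw [h0] at hZzero
    obtain ⟨hd, he, hab⟩ := ZC2 k d e α β Z hZIoo (by omega) hZzero
    have hzero1 : Gfull k lam d e α β s = 0 := by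
      simp only [Gfull, h0, hd, he]
      rw [Finset.sum_eq_zero (fun m hm => by
        rcases hab m (Finset.mem_range.mp hm) with ⟨h1, h2⟩
        rw [h1, h2]; ring)]
      ring
    rw [hFs] at hzero1
    exact one_ne_zero hzero1
  have hOnly : ∀ y, y ∈ Set.Ioo (0:ℝ) (2*π) → Gfull k lam d e α β y = 0 → y ∈ Z := by
    intro y hy hy0
    by_contra hyZ
    have hcard' : (insert y Z).card = 2*k+3 := by
      rw [Finset.card_insert_of_notMem hyZ, hZcard]
    have hIoo' : ∀ t ∈ insert y Z, t ∈ Set.Ioo (0:ℝ) (2*π) := by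
      intro t ht
      rcases Finset.mem_insert.mp ht with rfl | h
      · exact hy
      · exact hZIoo t h
    have hzero' : ∀ t ∈ insert y Z, Gfull k lam d e α β t = 0 := by
      intro t ht
      rcases Finset.mem_insert.mp ht with rfl | h
      · exact hy0
      · exact hZzero t h
    obtain ⟨hlam0, _, _, _⟩ := ZCfull k lam d e α β (insert y Z) hIoo' (by omega) hzero'
    exact hlamne hlam0
  have hsimple : ∀ z ∈ Z, G1 k lam d α β z ≠ 0 := fun z hz h0 =>
    simplicity k lam d e α β hlamne Z hZIoo (by omega) hZzero z hz h0
  have hFcont : Continuous (Gfull k lam d e α β) := (diff_Gfull k lam d e α β).continuous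
  -- sign alternation
  have hclaim : ∀ j, j ≤ 2*k+2 → ∀ t, q j < t → t < q (j+1) →
      0 < (-1:ℝ)^j * Gfull k lam d e α β t := by
    intro j
    induction j with
    | zero =>
        intro _ t ht0 ht1
        simp only [pow_zero, one_mul]
        have hnz : ∀ u ∈ Set.Ioo (q 0) (q 1), Gfull k lam d e α β u ≠ 0 := by
          intro u hu h0
          have huIoo : u ∈ Set.Ioo (0:ℝ) (2*π) := by
            constructor
            · rw [← hq0]; exact hu.1
            · exact lt_trans hu.2 (hqIoo 1 (by omega) (by omega)).2
          obtain ⟨j', hj', hju⟩ := hZmem' u (hOnly u huIoo h0)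
          have : q 1 ≤ q (j'+1) := hqle 1 (j'+1) (by omega) (by omega)
          rw [hju] at this
          exact absurd (lt_of_lt_of_le hu.2 this) (lt_irrefl _)
        have hsin : s ∈ Set.Ioo (q 0) (q 1) := ⟨by rw [hq0]; exact hsIoo.1, hs1⟩
        exact sign_const hFcont hnz hsin ⟨ht0, ht1⟩ (by rw [hFs]; exact one_pos)
    | succ n ih =>
        intro hn t ht0 ht1
        have hnz : ∀ u ∈ Set.Ioo (q (n+1)) (q (n+2)), Gfull k lam d e α β u ≠ 0 := by
          intro u hu h0
          have huIoo : u ∈ Set.Ioo (0:ℝ) (2*π) := by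
            constructor
            · refine lt_trans ?_ hu.1
              rw [← hq0]; exact hqmono 0 (n+1) (by omega) (by omega)
            · refine lt_of_lt_of_le hu.2 ?_
              rw [← hqlast]; exact hqle (n+2) (2*k+3) (by omega) (by omega)
          obtain ⟨j', hj', hju⟩ := hZmem' u (hOnly u huIoo h0)
          have c1 : n+1 < j'+1 := by
            by_contra hc
            push_neg at hc
            have := hqle (j'+1) (n+1) hc (by omega)
            rw [hju] at this
            exact absurd (lt_of_lt_of_le hu.1 this) (lt_irrefl _)
          have c2 : j'+1 < n+2 := by
            by_contra hc
            push_neg at hc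
            have := hqle (n+2) (j'+1) hc (by omega)
            rw [hju] at this
            exact absurd (lt_of_lt_of_le hu.2 this) (lt_irrefl _)
          omega
        by_contra hcon
        push_neg at hcon
        have hFt : Gfull k lam d e α β t ≠ 0 := hnz t ⟨ht0, ht1⟩
        have hgt : 0 < (-1:ℝ)^n * Gfull k lam d e α β t := by
          rcases lt_trichotomy ((-1:ℝ)^n * Gfull k lam d e α β t) 0 with h | h | h
          · exfalso
            have hpow : (-1:ℝ)^(n+1) = -((-1:ℝ)^n) := by ring
            rw [hpow] at hcon
            nlinarith
          · exfalso
            rcases mul_eq_zero.mp h with h' | h'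
            · exact (pow_ne_zero n (by norm_num : (-1:ℝ) ≠ 0)) h'
            · exact hFt h'
          · exact h
        set g : ℝ → ℝ := fun u => (-1:ℝ)^n * Gfull k lam d e α β u with hg
        have hgcont : Continuous g := continuous_const.mul hFcont
        have hgnz : ∀ u ∈ Set.Ioo (q (n+1)) (q (n+2)), g u ≠ 0 := by
          intro u hu h0
          rcases mul_eq_zero.mp h0 with h' | h'
          · exact (pow_ne_zero n (by norm_num : (-1:ℝ) ≠ 0)) h'
          · exact hnz u hu h'
        have hgpos : ∀ u ∈ Set.Ioo (q (n+1)) (q (n+2)), 0 < g u := by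
          intro u hu
          exact sign_const hgcont hgnz ⟨ht0, ht1⟩ hu hgt
        have hgposL : ∀ u ∈ Set.Ioo (q n) (q (n+1)), 0 < g u := by
          intro u hu
          exact ih (by omega) u hu.1 hu.2
        have hz0 : Gfull k lam d e α β (q (n+1)) = 0 := hFnode n (by omega)
        have hgz0 : g (q (n+1)) = 0 := by rw [hg]; simp only; rw [hz0]; ring
        have hlocmin : IsLocalMin g (q (n+1)) := by
          have hnbhd : Set.Ioo (q n) (q (n+2)) ∈ nhds (q (n+1)) :=
            Ioo_mem_nhds (hstep n (by omega)) (hstep (n+1) (by omega))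
          filter_upwards [hnbhd] with u hu
          rw [hgz0]
          rcases lt_trichotomy u (q (n+1)) with h | h | h
          · exact le_of_lt (hgposL u ⟨hu.1, h⟩)
          · rw [h, hgz0]
          · exact le_of_lt (hgpos u ⟨h, hu.2⟩)
        have hder := hlocmin.deriv_eq_zero
        have hderiv_g : deriv g (q (n+1)) = (-1:ℝ)^n * G1 k lam d α β (q (n+1)) := by
          rw [hg]
          rw [deriv_const_mul _ ((diff_Gfull k lam d e α β) _)]
          rw [deriv_Gfull]
        rw [hderiv_g] at hder
        have hG10 : G1 k lam d α β (q (n+1)) = 0 := by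
          rcases mul_eq_zero.mp hder with h' | h'
          · exact absurd h' (pow_ne_zero n (by norm_num : (-1:ℝ) ≠ 0))
          · exact h'
        exact hsimple (q (n+1)) (hZmem n (by omega)) hG10
  -- the leading coefficient is positive
  have hZne : Z.Nonempty := Finset.card_pos.mp (by omega)
  have hminZ : Z.min' hZne = q 1 := by
    apply le_antisymm
    · exact Finset.min'_le _ _ (hZmem 0 (by omega))
    · apply Finset.le_min'
      intro y hy
      obtain ⟨j, hj, rfl⟩ := hZmem' y hy
      exact hqle 1 (j+1) (by omega) (by omega)
  have hmaxZ : Z.max' hZne = q (2*k+2) := by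
    apply le_antisymm
    · apply Finset.max'_le
      intro y hy
      obtain ⟨j, hj, rfl⟩ := hZmem' y hy
      exact hqle (j+1) (2*k+2) (by omega) (by omega)
    · exact Finset.le_max' _ _ (hZmem (2*k+1) (by omega))
  have hq2k2 : q (2*k+2) < 2*π := (hqIoo (2*k+2) (by omega) (by omega)).2
  set tmid : ℝ := (q (2*k+2) + 2*π)/2 with htmid
  have htmid1 : q (2*k+2) < tmid := by rw [htmid]; linarith
  have htmid2 : tmid < 2*π := by rw [htmid]; linarith
  have hFtmid : 0 < Gfull k lam d e α β tmid := by
    have := hclaim (2*k+2) (le_refl _) tmid htmid1 (by rw [hqlast]; exact htmid2)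
    have hpow : ((-1:ℝ))^(2*k+2) = 1 := Even.neg_one_pow ⟨k+1, by ring⟩
    rw [hpow, one_mul] at this
    exact this
  have hlampos : 0 < lam := by
    rcases lt_trichotomy lam 0 with hneg | h0 | hpos
    · exfalso
      have hc1 : (1/lam) * lam = 1 := by field_simp
      have hfun : ∀ t, Gfull k 1 ((1/lam)*d) ((1/lam)*e) (fun m => (1/lam) * α m)
          (fun m => (1/lam) * β m) t = (1/lam) * Gfull k lam d e α β t := by
        intro t
        rw [← Gfull_smul k (1/lam) lam d e α β t, hc1]
      have hZzero' : ∀ t ∈ Z, Gfull k 1 ((1/lam)*d) ((1/lam)*e) (fun m => (1/lam) * α m)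
          (fun m => (1/lam) * β m) t = 0 := by
        intro t ht
        rw [hfun t, hZzero t ht, mul_zero]
      have hlaminv : (1/lam) < 0 := one_div_neg.mpr hneg
      refine lemS k ((1/lam)*d) ((1/lam)*e) (fun m => (1/lam) * α m) (fun m => (1/lam) * β m)
        Z hZne hZIoo (by omega) hZzero' s ?_ ?_ tmid ?_ ?_
      · rw [hminZ]; exact ⟨hsIoo.1, hs1⟩
      · rw [hfun s, hFs, mul_one]; exact hlaminv
      · rw [hmaxZ]; exact ⟨htmid1, htmid2⟩
      · rw [hfun tmid]; exact mul_neg_of_neg_of_pos hlaminv hFtmid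
    · exact absurd h0 hlamne
    · exact hpos
  -- conclude
  have hc1 : (1/lam) * lam = 1 := by field_simp
  have hfun : ∀ t, Gfull k 1 ((1/lam)*d) ((1/lam)*e) (fun m => (1/lam) * α m)
      (fun m => (1/lam) * β m) t = (1/lam) * Gfull k lam d e α β t := by
    intro t
    rw [← Gfull_smul k (1/lam) lam d e α β t, hc1]
  refine ⟨(1/lam)*d, (1/lam)*e, fun m => (1/lam) * α m, fun m => (1/lam) * β m, ?_, ?_⟩
  · intro i
    rw [hfun]
    have : q (2*(i:ℕ)+1) = a i := hqa i
    rw [← this]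
    have h2 : (2*(i:ℕ)+1) = (2*(i:ℕ))+1 := rfl
    rw [h2, hFnode (2*(i:ℕ)) (by have := i.isLt; omega), mul_zero]
  · intro b hb
    have hbIoo := hB hb
    -- b is not a node
    have hbnotnode : ∀ j, j < 2*k+2 → q (j+1) ≠ b := by
      intro j hj heq
      rcases Nat.even_or_odd j with ⟨l, hl⟩ | ⟨l, hl⟩
      · -- q (j+1) = a l
        have hlk : l < k+1 := by omega
        have : q (2*(l:ℕ)+1) = a ⟨l, hlk⟩ := hqa ⟨l, hlk⟩
        rw [show j+1 = 2*l+1 from by omega, this] at heq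
        exact hdisj ⟨l, hlk⟩ (heq ▸ hb)
      · -- q (j+1) = a l + ε l
        have hlk : l < k+1 := by omega
        have : q (2*(l:ℕ)+2) = a ⟨l, hlk⟩ + ε ⟨l, hlk⟩ := hqae ⟨l, hlk⟩
        rw [show j+1 = 2*l+2 from by omega, this] at heq
        have := hε3 ⟨l, hlk⟩ b (Or.inl hb)
        apply this
        rw [← heq]
        exact ⟨by have := hε1 ⟨l, hlk⟩; linarith, le_refl _⟩
    -- largest j with q j < b
    set T : Finset ℕ := (Finset.range (2*k+3)).filter (fun j => q j < b) with hT
    have h0T : 0 ∈ T := by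
      rw [hT, Finset.mem_filter]
      exact ⟨Finset.mem_range.mpr (by omega), by rw [hq0]; exact hbIoo.1⟩
    have hTne : T.Nonempty := ⟨0, h0T⟩
    set jm : ℕ := T.max' hTne with hjm
    have hjmT : jm ∈ T := T.max'_mem hTne
    have hjmlt : jm < 2*k+3 := Finset.mem_range.mp (Finset.mem_filter.mp hjmT).1
    have hjmq : q jm < b := (Finset.mem_filter.mp hjmT).2
    have hjmle : jm ≤ 2*k+2 := by omega
    have hbup : b < q (jm+1) := by
      rcases lt_trichotomy b (q (jm+1)) with h | h | h
      · exact h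
      · exfalso
        rcases Nat.lt_or_ge (jm+1) (2*k+3) with hlt | hge
        · exact hbnotnode jm (by omega) h.symm
        · have : jm+1 = 2*k+3 := by omega
          rw [this, hqlast] at h
          exact absurd (h ▸ hbIoo.2) (lt_irrefl _)
      · exfalso
        rcases Nat.lt_or_ge (jm+1) (2*k+3) with hlt | hge
        · have : jm+1 ∈ T := by
            rw [hT, Finset.mem_filter]
            exact ⟨Finset.mem_range.mpr hlt, h⟩
          have := T.le_max' _ this
          omega
        · have : jm+1 = 2*k+3 := by omega
          rw [this, hqlast] at h
          exact absurd (lt_trans hbIoo.2 h) (lt_irrefl _)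
    -- jm is even
    have hjmeven : Even jm := by
      by_contra hodd
      rw [Nat.not_even_iff_odd] at hodd
      obtain ⟨l, hl⟩ := hodd
      have hlk : l < k+1 := by omega
      have hv1 : q (2*(l:ℕ)+1) = a ⟨l, hlk⟩ := hqa ⟨l, hlk⟩
      have hv2 : q (2*(l:ℕ)+2) = a ⟨l, hlk⟩ + ε ⟨l, hlk⟩ := hqae ⟨l, hlk⟩
      have hq1 : q jm = a ⟨l, hlk⟩ := by rw [hl, show 2*l+1 = 2*(l:ℕ)+1 from by ring]; exact hv1
      have hq2 : q (jm+1) = a ⟨l, hlk⟩ + ε ⟨l, hlk⟩ := by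
        rw [hl, show 2*l+1+1 = 2*(l:ℕ)+2 from by ring]; exact hv2
      have := hε3 ⟨l, hlk⟩ b (Or.inl hb)
      apply this
      constructor
      · rw [← hq1]; exact hjmq
      · rw [← hq2]; exact le_of_lt hbup
    have := hclaim jm hjmle b hjmq hbup
    rw [Even.neg_one_pow hjmeven, one_mul] at this
    rw [hfun b]
    exact mul_pos (by positivity) this

/-- For a finite set of points on the generalized helix over `(0, 2π)` and any
`k+1` of them, there is a sphere through those `k+1` points with every other
point of `P` strictly outside. -/
theorem stmt_14 (k : ℕ) (P : Set (EuclideanSpace ℝ (Fin (2 * k + 1))))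
    (hPfin : P.Finite)
    (hP : P ⊆ genHelix k '' Set.Ioo 0 (2 * π))
    (a : Fin (k + 1) → ℝ) (hmono : StrictMono a)
    (ha : ∀ i, a i ∈ Set.Ioo (0 : ℝ) (2 * π))
    (haP : ∀ i, genHelix k (a i) ∈ P) :
    ∃ (c : EuclideanSpace ℝ (Fin (2 * k + 1))) (r : ℝ),
      (∀ i, dist (genHelix k (a i)) c = r) ∧
      ∀ p ∈ P, (∀ i, p ≠ genHelix k (a i)) → r < dist p c := by
  classical
  have hinj : Function.Injective (genHelix k) := by
    intro t t' h
    have := congrArg (fun x : EuclideanSpace ℝ (Fin (2 * k + 1)) => x ⟨0, by omega⟩) h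
    simpa [genHelix] using this
  set B : Set ℝ := (genHelix k ⁻¹' P ∩ Set.Ioo 0 (2*π)) \ Set.range a with hBdef
  have hBfin : B.Finite := by
    apply Set.Finite.subset (hPfin.preimage (Set.injOn_of_injective hinj))
    intro b hb
    exact hb.1.1
  have hBsub : B ⊆ Set.Ioo (0:ℝ) (2*π) := fun b hb => hb.1.2
  have hdisj : ∀ i, a i ∉ B := fun i hi => hi.2 ⟨i, rfl⟩
  obtain ⟨d, e, α, β, hGzero, hGpos⟩ := core k a hmono ha B hBfin hBsub hdisj
  -- center
  set c : EuclideanSpace ℝ (Fin (2*k+1)) := WithLp.toLp 2 (fun i =>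
    if (i : ℕ) = 0 then -(d/2)
    else if (i : ℕ) % 2 = 1 then -(α (((i:ℕ)+1)/2 - 1))/2
    else -(β ((i:ℕ)/2 - 1))/2 : Fin (2*k+1) → ℝ) with hc
  set C : ℝ := d^2/4 + k + (∑ m ∈ Finset.range k, (α m^2 + β m^2)/4) - e with hC
  set FN : ℝ → ℕ → ℝ := fun t j =>
    if j = 0 then t
    else if j % 2 = 1 then Real.cos (((j + 1) / 2 : ℕ) * t)
    else Real.sin ((j / 2 : ℕ) * t) with hFN
  set CN : ℕ → ℝ := fun j =>
    if j = 0 then -(d/2)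
    else if j % 2 = 1 then -(α ((j+1)/2 - 1))/2
    else -(β (j/2 - 1))/2 with hCN
  have hkey : ∀ t : ℝ, ∑ i : Fin (2*k+1), (genHelix k t i - c i)^2
      = Gfull k 1 d e α β t + C := by
    intro t
    have h1 : ∑ i : Fin (2*k+1), (genHelix k t i - c i)^2
        = ∑ i : Fin (2*k+1), (fun j : ℕ => (FN t j - CN j)^2) (i:ℕ) :=
      Finset.sum_congr rfl (fun i _ => rfl)
    rw [h1, Fin.sum_univ_eq_sum_range (fun j : ℕ => (FN t j - CN j)^2) (2*k+1),
      sumsplit1 (fun j : ℕ => (FN t j - CN j)^2) k]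
    have hFN0 : FN t 0 = t := by simp [hFN]
    have hCN0 : CN 0 = -(d/2) := by simp [hCN]
    have hterm : ∀ m ∈ Finset.range k,
        ((FN t (2*m+1) - CN (2*m+1))^2 + (FN t (2*m+2) - CN (2*m+2))^2)
        = 1 + (α m * Real.cos (((m:ℝ)+1)*t) + β m * Real.sin (((m:ℝ)+1)*t))
          + (α m^2 + β m^2)/4 := by
      intro m _
      have e1 : (2*m+1+1)/2 = m+1 := by omega
      have e2 : (2*m+1) % 2 = 1 := by omega
      have e3 : (2*m+2)/2 = m+1 := by omega
      have e4 : (2*m+2) % 2 = 0 := by omega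
      have hFN1 : FN t (2*m+1) = Real.cos (((m:ℝ)+1) * t) := by
        simp only [hFN]
        rw [if_neg (by omega), if_pos e2, e1]
        congr 1
        push_cast; ring
      have hFN2 : FN t (2*m+2) = Real.sin (((m:ℝ)+1) * t) := by
        simp only [hFN]
        rw [if_neg (by omega), if_neg (by omega), e3]
        congr 1
        push_cast; ring
      have hCN1 : CN (2*m+1) = -(α m)/2 := by
        simp only [hCN]
        rw [if_neg (by omega), if_pos e2, e1]
        norm_num
      have hCN2 : CN (2*m+2) = -(β m)/2 := by
        simp only [hCN]
        rw [if_neg (by omega), if_neg (by omega), e3]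
        norm_num
      rw [hFN1, hFN2, hCN1, hCN2]
      have hpyth := Real.sin_sq_add_cos_sq (((m:ℝ)+1) * t)
      nlinarith [hpyth]
    rw [Finset.sum_congr rfl hterm]
    rw [hFN0, hCN0]
    simp only [Gfull, hC]
    rw [Finset.sum_add_distrib, Finset.sum_add_distrib, Finset.sum_const, Finset.card_range]
    push_cast
    ring
  have hCnonneg : 0 ≤ C := by
    have h0 := hkey (a 0)
    rw [hGzero 0, zero_add] at h0
    rw [← h0]
    apply Finset.sum_nonneg
    intro i _
    positivity
  have hdist : ∀ t, dist (genHelix k t) c = Real.sqrt (Gfull k 1 d e α β t + C) := by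
    intro t
    rw [EuclideanSpace.dist_eq]
    congr 1
    rw [← hkey t]
    apply Finset.sum_congr rfl
    intro i _
    rw [Real.dist_eq, sq_abs]
  refine ⟨c, Real.sqrt C, ?_, ?_⟩
  · intro i
    rw [hdist (a i), hGzero i, zero_add]
  · intro p hp hpne
    obtain ⟨b, hbIoo, rfl⟩ := hP hp
    have hbB : b ∈ B := by
      refine ⟨⟨hp, hbIoo⟩, ?_⟩
      rintro ⟨i, rfl⟩
      exact hpne i rfl
    have hGb := hGpos b hbB
    rw [hdist b]
    apply Real.sqrt_lt_sqrt hCnonneg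
    linarith
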